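/- arXiv:1509.04932 — 2 statements merged into one kernel-verified Lean document; each statement's English description precedes it below -/
import Mathlib

section
/- If n is even, the minimum length of an odd cycle in the folded hypercube FQ_n is n + 1. -/
open SimpleGraph

/-- The `n`-dimensional hypercube: vertices are binary strings of length `n`
(indexed so that bit `i+1` of the paper is index `i`), adjacent iff they
differ in exactly one bit. -/
def hypercube (n : ℕ) : SimpleGraph (Fin n → Bool) where
  Adj u v := ∃! i, u i ≠ v i
  symm := by
    constructor
    rintro u v ⟨i, hi, hu⟩
    exact ⟨i, hi.symm, fun j hj => hu j hj.symm⟩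
  loopless := by
    constructor
    rintro u ⟨i, hi, -⟩
    exact hi rfl

/-- Skip relation: `u` and `v` differ exactly in the last `k` bits
(indices `0, …, k-1`). -/
def skipRel (n k : ℕ) (u v : Fin n → Bool) : Prop :=
  u ≠ v ∧ ∀ i : Fin n, (i.val < k → u i ≠ v i) ∧ (k ≤ i.val → u i = v i)

/-- The enhanced hypercube `Q_{n,k}`: hypercube edges together with skip edges. -/
def enhanced (n k : ℕ) : SimpleGraph (Fin n → Bool) where
  Adj u v := (hypercube n).Adj u v ∨ skipRel n k u v
  symm := by
    constructor
    rintro u v (h | ⟨hne, h⟩)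
    · exact Or.inl h.symm
    · exact Or.inr ⟨hne.symm, fun i =>
        ⟨fun hi => ((h i).1 hi).symm, fun hi => ((h i).2 hi).symm⟩⟩
  loopless := by
    constructor
    rintro u (h | ⟨hne, -⟩)
    · exact (hypercube n).irrefl h
    · exact hne rfl

/-- The folded hypercube `FQ_n`: hypercube edges together with complementary edges. -/
def folded (n : ℕ) : SimpleGraph (Fin n → Bool) where
  Adj u v := (hypercube n).Adj u v ∨ (u ≠ v ∧ ∀ i, u i ≠ v i)
  symm := by
    constructor
    rintro u v (h | ⟨hne, h⟩)
    · exact Or.inl h.symm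
    · exact Or.inr ⟨hne.symm, fun i => (h i).symm⟩
  loopless := by
    constructor
    rintro u (h | ⟨hne, -⟩)
    · exact (hypercube n).irrefl h
    · exact hne rfl

/-- The Cartesian product `K₂ × G`: two copies of `G` joined by crossing edges. -/
def K2Prod {V : Type*} (G : SimpleGraph V) : SimpleGraph (Bool × V) :=
  (completeGraph Bool) □ G

/-- The edge `e` lies on a cycle of length `l` in `G`. -/
def EdgeOnCycle {V : Type*} (G : SimpleGraph V) (e : Sym2 V) (l : ℕ) : Prop :=
  ∃ (v : V) (c : G.Walk v v), c.IsCycle ∧ c.length = l ∧ e ∈ c.edges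

/-!
A closed walk flips every coordinate an even number of times. A complementary step flips all
coordinates and a hypercube step flips exactly one, so if a closed walk has `c` complementary
steps and `h i` hypercube steps in direction `i`, then every `c + h i` is even. Summing over the
even number `n` of coordinates makes `∑ i, h i` even, so on an odd closed walk `c` is odd. Then
every `h i` is odd, hence positive, and the length `c + ∑ i, h i` is at least `1 + n`.

Conversely `0⋯0, 10⋯0, 110⋯0, …, 1⋯1`, closed up by the complementary edge from `1⋯1` to `0⋯0`,
is a cycle of length `n + 1`.
-/

namespace SimpleGraph.Walk

variable {V : Type*} {G : SimpleGraph V}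

theorem even_countP_darts_ne_iff (f : V → Bool) {u w : V} (p : G.Walk u w) :
    Even (p.darts.countP fun d => f d.fst ≠ f d.snd) ↔ f u = f w := by
  induction p with
  | nil => simp
  | @cons u v w _ q ih =>
    rw [darts_cons, List.countP_cons]
    cases hu : f u <;> cases hv : f v <;> simp_all [Nat.even_add_one]

theorem even_countP_darts_ne (f : V → Bool) {u : V} (p : G.Walk u u) :
    Even (p.darts.countP fun d => f d.fst ≠ f d.snd) :=
  (p.even_countP_darts_ne_iff f).2 rfl

end SimpleGraph.Walk

theorem List.sum_countP_eq_length {α ι : Type*} [Fintype ι] (p : ι → α → Prop)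
    [∀ i, DecidablePred (p i)] (l : List α) (h : ∀ a ∈ l, ∃! i, p i a) :
    ∑ i, l.countP (fun a => p i a) = l.length := by
  classical
  induction l with
  | nil => simp
  | cons a l ih =>
    obtain ⟨i₀, hi₀, huniq⟩ := h a List.mem_cons_self
    have hp : ∀ i, p i a = decide (i = i₀) := fun i => by
      by_cases hi : i = i₀
      · simp [hi, hi₀]
      · simpa [hi] using mt (huniq i) hi
    simp only [List.countP_cons, Finset.sum_add_distrib, hp, decide_eq_true_eq,
      Finset.sum_ite_eq', Finset.mem_univ, if_true, List.length_cons,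
      ih fun b hb => h b (List.mem_cons_of_mem a hb)]

namespace Folded

variable {n : ℕ} {u w : Fin n → Bool}

def complementSteps (p : (folded n).Walk u w) : ℕ :=
  p.darts.countP fun d => ∀ i, d.fst i ≠ d.snd i

def cubeSteps (p : (folded n).Walk u w) (i : Fin n) : ℕ :=
  (p.darts.filter fun d => !∀ j, d.fst j ≠ d.snd j).countP fun d => d.fst i ≠ d.snd i

theorem length_eq_complementSteps_add_sum_cubeSteps (p : (folded n).Walk u w) :
    p.length = complementSteps p + ∑ i, cubeSteps p i := by
  have hcube : ∀ d ∈ p.darts.filter (fun d => !∀ j, d.fst j ≠ d.snd j),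
      ∃! i, d.fst i ≠ d.snd i := by
    intro d hd
    simp only [List.mem_filter, Bool.not_eq_true', decide_eq_false_iff_not] at hd
    exact d.adj.resolve_right fun h => hd.2 h.2
  unfold complementSteps cubeSteps
  rw [List.sum_countP_eq_length _ _ hcube, ← p.length_darts,
    List.length_eq_countP_add_countP (fun d => ∀ j, d.fst j ≠ d.snd j)]
  simp only [List.countP_eq_length_filter, decide_eq_true_eq, decide_not]

theorem even_complementSteps_add_cubeSteps {v : Fin n → Bool} (p : (folded n).Walk v v)
    (i : Fin n) : Even (complementSteps p + cubeSteps p i) := by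
  have hall : (p.darts.filter fun d => ∀ j, d.fst j ≠ d.snd j).countP
      (fun d => d.fst i ≠ d.snd i) = complementSteps p := by
    rw [List.countP_eq_length.2, complementSteps, List.countP_eq_length_filter]
    intro d hd
    simpa using of_decide_eq_true (List.mem_filter.1 hd).2 i
  rw [← hall, cubeSteps, ← List.countP_eq_countP_filter_add]
  exact p.even_countP_darts_ne (· i)

theorem add_one_le_length_of_odd (he : Even n) {v : Fin n → Bool} (p : (folded n).Walk v v)
    (hodd : Odd p.length) : n + 1 ≤ p.length := by
  have hpar := even_complementSteps_add_cubeSteps p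
  have hsum : Even (∑ i, cubeSteps p i) := by
    have : Even (∑ i, (complementSteps p + cubeSteps p i)) := Finset.even_sum _ fun i _ => hpar i
    rw [Finset.sum_add_distrib, Finset.sum_const, Finset.card_univ, Fintype.card_fin,
      smul_eq_mul, Nat.even_add] at this
    exact this.1 (he.mul_right _)
  rw [length_eq_complementSteps_add_sum_cubeSteps] at hodd ⊢
  have hC : Odd (complementSteps p) := by
    rw [Nat.odd_add] at hodd
    exact hodd.2 hsum
  have hcube : ∀ i, 1 ≤ cubeSteps p i := fun i => by
    obtain ⟨a, ha⟩ := hpar i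
    obtain ⟨b, hb⟩ := hC
    omega
  have hn : n ≤ ∑ i, cubeSteps p i := by
    simpa using Finset.sum_le_sum (s := Finset.univ) fun i _ => hcube i
  linarith [hC.pos]

end Folded

def lowBits (n j : ℕ) : Fin n → Bool := fun i => decide (i.val < j)

theorem lowBits_injective (n : ℕ) : Function.Injective fun j : Fin (n + 1) => lowBits n j := by
  intro j k hjk
  by_contra hne
  rcases Fin.lt_or_lt_of_ne hne with h | h
  · simpa [lowBits, h] using congrFun hjk ⟨j, by omega⟩
  · simpa [lowBits, h] using congrFun hjk ⟨k, by omega⟩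

theorem hypercube_adj_lowBits_succ {n j : ℕ} (hj : j < n) :
    (hypercube n).Adj (lowBits n (j + 1)) (lowBits n j) := by
  refine ⟨⟨j, hj⟩, by simp [lowBits], fun i hi => Fin.ext (show i.val = j from ?_)⟩
  simp only [lowBits, ne_eq, decide_eq_decide] at hi
  by_contra hij
  exact hi ⟨fun _ => by omega, fun _ => by omega⟩

theorem folded_adj_lowBits_zero {n : ℕ} (hn : 0 < n) :
    (folded n).Adj (lowBits n 0) (lowBits n n) := by
  refine Or.inr ⟨fun h => ?_, fun i => by simp [lowBits]⟩
  exact hn.ne' (by simpa [lowBits] using congrFun h ⟨0, hn⟩)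

theorem folded_adj_lowBits_of_sub_eq_one {n : ℕ} {a b : Fin (n + 1)} (h : (a - b).val = 1) :
    (folded n).Adj (lowBits n a) (lowBits n b) := by
  rcases le_or_gt b a with hba | hab
  · rw [Fin.coe_sub_iff_le.2 hba] at h
    rw [show a.val = b.val + 1 by omega]
    exact Or.inl (hypercube_adj_lowBits_succ (by omega))
  · rw [Fin.coe_sub_iff_lt.2 hab] at h
    rw [show a.val = 0 by omega, show b.val = n by omega]
    exact folded_adj_lowBits_zero (by omega)

def cycleGraphToFolded (n : ℕ) : cycleGraph (n + 1) →g folded n where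
  toFun j := lowBits n j
  map_rel' h := (cycleGraph_adj'.1 h).elim folded_adj_lowBits_of_sub_eq_one
    fun h => (folded_adj_lowBits_of_sub_eq_one h).symm

theorem cycleGraph_isContained_folded (n : ℕ) : cycleGraph (n + 1) ⊑ folded n :=
  ⟨⟨cycleGraphToFolded n, lowBits_injective n⟩⟩

/-- If `n` is even, the minimum length of an odd cycle in `FQ_n` is `n + 1`. -/
theorem stmt11 (n : ℕ) (hn : 1 ≤ n) (he : Even n) :
    (∃ (v : Fin n → Bool) (c : (folded n).Walk v v), c.IsCycle ∧ c.length = n + 1) ∧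
    (∀ (v : Fin n → Bool) (c : (folded n).Walk v v), c.IsCycle → Odd c.length →
      n + 1 ≤ c.length) := by
  have hn2 : 2 < n + 1 := by
    obtain ⟨m, rfl⟩ := he
    omega
  exact ⟨(cycleGraph_isContained_iff hn2).1 (cycleGraph_isContained_folded n),
    fun v c _ => Folded.add_one_le_length_of_odd he c⟩
end

section
/- If k is even, then every edge of the enhanced hypercube Q_{n,k} (n ≥ 3, 2 ≤ k ≤ n) lies on a cycle of every odd length l with k + 3 ≤ l ≤ 2^n − 1. -/
open SimpleGraph

/-!
An edge `uv` of `Q_{n,k}` is closed into an odd cycle by paths of `Q_n`. If `uv` is a skip edge,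
`u` and `v` are at the even Hamming distance `k`, and a path of `Q_n` of the even length `l - 1`
joins them. If `uv` is a hypercube edge, the skip neighbour `y` of `u` is at the odd distance
`k ± 1` from `v`, and a path of `Q_n` of the odd length `l - 2` from `v` to `y` avoiding `u`
closes the cycle `u v ⋯ y u`.

Both kinds of paths exist for every length of the right parity between the distance and
`2 ^ n - 1` (resp. `2 ^ n - 3` when a vertex `x` is avoided). This is proved by induction on `n`,
splitting `Q_{n+1}` along a coordinate (separating `u` from `x`) into two copies of `Q_n`: short
paths stay in one copy, longer ones cross over once, or replace an edge by a detour through the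
other copy.
-/

open Finset

section Hamming

variable {n : ℕ}

theorem hypercube_adj_iff {u v : Fin n → Bool} :
    (hypercube n).Adj u v ↔ hammingDist u v = 1 := by
  simp only [hammingDist, card_eq_one, eq_singleton_iff_unique_mem, mem_filter, mem_univ,
    true_and]
  rfl

theorem hammingDist_insertNth (j : Fin (n + 1)) (a b : Bool) (x y : Fin n → Bool) :
    hammingDist (j.insertNth a x : Fin (n + 1) → Bool) (j.insertNth b y) =
      hammingDist x y + if a = b then 0 else 1 := by
  simp only [hammingDist, card_filter]
  rw [Fin.sum_univ_succAbove _ j]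
  simp [add_comm]

theorem hammingDist_update_add {β : Fin n → Type*} [∀ i, DecidableEq (β i)] (u v : ∀ i, β i)
    (i : Fin n) (b : β i) :
    hammingDist (Function.update u i b) v + (if u i = v i then 0 else 1) =
      hammingDist u v + if b = v i then 0 else 1 := by
  simp only [hammingDist, card_filter, ← add_sum_erase _ _ (mem_univ i)]
  have : ∑ j ∈ univ.erase i, (if Function.update u i b j ≠ v j then 1 else 0) =
      ∑ j ∈ univ.erase i, (if u j ≠ v j then 1 else 0) :=
    sum_congr rfl fun j hj => by rw [Function.update_of_ne (ne_of_mem_erase hj)]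
  rw [this, Function.update_self]
  split_ifs <;> simp_all <;> omega

theorem hypercube_adj_update (u : Fin n → Bool) (i : Fin n) :
    (hypercube n).Adj u (Function.update u i (!u i)) := by
  refine ⟨i, by simp, fun j hj => ?_⟩
  by_contra hji
  simp [Function.update_of_ne hji] at hj

theorem hypercube_adj_iff_exists_update {u w : Fin n → Bool} :
    (hypercube n).Adj u w ↔ ∃ i, w = Function.update u i (!u i) := by
  refine ⟨fun ⟨i, hi, huniq⟩ => ⟨i, funext fun j => ?_⟩,
    fun ⟨i, hw⟩ => hw ▸ hypercube_adj_update u i⟩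
  rcases eq_or_ne j i with rfl | hji
  · revert hi; cases u j <;> cases w j <;> simp
  · rw [Function.update_of_ne hji]
    by_contra h
    exact hji (huniq j (Ne.symm h))

theorem hammingDist_eq_add_one_or_of_adj {v w : Fin n → Bool} (h : (hypercube n).Adj v w)
    (u : Fin n → Bool) :
    hammingDist u w = hammingDist u v + 1 ∨ hammingDist u v = hammingDist u w + 1 := by
  obtain ⟨i, rfl⟩ := hypercube_adj_iff_exists_update.mp h
  have := hammingDist_update_add v u i (!v i)
  rw [hammingDist_comm u, hammingDist_comm u]
  cases hv : v i <;> cases hu : u i <;> simp [hu, hv] at this ⊢ <;> omega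

theorem exists_hypercube_adj_notMem (v : Fin n → Bool) (S : Finset (Fin n → Bool))
    (hS : #S < n) : ∃ w, (hypercube n).Adj v w ∧ w ∉ S := by
  have hinj : Function.Injective fun i => Function.update v i (!v i) := fun i j h => by
    by_contra hij
    simpa [Function.update_of_ne hij] using congrFun h i
  obtain ⟨w, hw, hwS⟩ := exists_mem_notMem_of_card_lt_card
    (s := S) (t := univ.image fun i => Function.update v i (!v i))
    (by rwa [card_image_of_injective _ hinj, card_univ, Fintype.card_fin])
  obtain ⟨i, -, rfl⟩ := mem_image.mp hw
  exact ⟨_, hypercube_adj_update v i, hwS⟩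

theorem exists_hypercube_adj_ne_notMem {u : Fin n → Bool} (v : Fin n → Bool)
    (S : Finset (Fin n → Bool)) (hS : #S < n) (hS' : hammingDist u v = 1 → #S + 1 < n) :
    ∃ w, (hypercube n).Adj v w ∧ w ≠ u ∧ w ∉ S := by
  by_cases hvu : (hypercube n).Adj v u
  · obtain ⟨w, hvw, hw⟩ := exists_hypercube_adj_notMem v (insert u S)
      ((card_insert_le u S).trans_lt (hS' (hypercube_adj_iff.mp hvu.symm)))
    exact ⟨w, hvw, fun h => hw (h ▸ mem_insert_self u S), fun h => hw (mem_insert_of_mem h)⟩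
  · obtain ⟨w, hvw, hw⟩ := exists_hypercube_adj_notMem v S hS
    exact ⟨w, hvw, fun h => hvu (h ▸ hvw), hw⟩

theorem exists_hypercube_adj_adj_ne {u v : Fin n → Bool} (huv : hammingDist u v = 2)
    (y : Fin n → Bool) : ∃ w, (hypercube n).Adj u w ∧ (hypercube n).Adj w v ∧ w ≠ y := by
  set D : Finset (Fin n) := {i | u i ≠ v i}
  have hinj : Set.InjOn (fun i => Function.update u i (!u i)) D := fun i _ j _ h => by
    by_contra hij
    simpa [Function.update_of_ne hij] using congrFun h i
  obtain ⟨w, hw, hwy⟩ := exists_mem_notMem_of_card_lt_card (s := {y}) (t := D.image _)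
    (by rw [card_image_of_injOn hinj, card_singleton, show #D = 2 from huv]; norm_num)
  obtain ⟨i, hi, rfl⟩ := mem_image.mp hw
  refine ⟨_, hypercube_adj_update u i, hypercube_adj_iff.mpr ?_, by simpa using hwy⟩
  have := hammingDist_update_add u v i (!u i)
  simp only [D, mem_filter, mem_univ, true_and] at hi
  cases hu : u i <;> cases hv : v i <;> simp_all

end Hamming

namespace SimpleGraph

variable {V W : Type*} {G : SimpleGraph V}

def HasPathAvoiding (G : SimpleGraph V) (S : Set V) (u v : V) (m : ℕ) : Prop :=
  ∃ p : G.Walk u v, p.IsPath ∧ p.length = m ∧ ∀ z ∈ p.support, z ∉ S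

namespace HasPathAvoiding

variable {S T : Set V} {u v w : V} {m : ℕ}

theorem nil (hu : u ∉ S) : G.HasPathAvoiding S u u 0 :=
  ⟨.nil, .nil, rfl, by simpa using hu⟩

theorem start_notMem (h : G.HasPathAvoiding S u v m) : u ∉ S := by
  obtain ⟨p, -, -, hp⟩ := h
  exact hp u p.start_mem_support

theorem mono (h : G.HasPathAvoiding S u v m) (hTS : T ⊆ S) : G.HasPathAvoiding T u v m := by
  obtain ⟨p, hp, hlen, hpS⟩ := h
  exact ⟨p, hp, hlen, fun z hz hzT => hpS z hz (hTS hzT)⟩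

theorem reverse (h : G.HasPathAvoiding S u v m) : G.HasPathAvoiding S v u m := by
  obtain ⟨p, hp, hlen, hpS⟩ := h
  exact ⟨p.reverse, hp.reverse, by simpa using hlen, by simpa using hpS⟩

theorem cons (huv : G.Adj u v) (hu : u ∉ S) (h : G.HasPathAvoiding (insert u S) v w m) :
    G.HasPathAvoiding S u w (m + 1) := by
  obtain ⟨p, hp, rfl, hpS⟩ := h
  refine ⟨.cons huv p, hp.cons fun hup => hpS u hup (Set.mem_insert u S), rfl, ?_⟩
  simp only [Walk.support_cons, List.mem_cons, forall_eq_or_imp]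
  exact ⟨hu, fun z hz hzS => hpS z hz (Set.mem_insert_of_mem u hzS)⟩

theorem exists_cons (h : G.HasPathAvoiding S u w (m + 1)) :
    ∃ v, G.Adj u v ∧ G.HasPathAvoiding (insert u S) v w m := by
  obtain ⟨p, hp, hlen, hpS⟩ := h
  cases p with
  | nil => simp at hlen
  | cons huv q =>
    rw [Walk.cons_isPath_iff] at hp
    simp only [Walk.support_cons, List.mem_cons, forall_eq_or_imp] at hpS
    refine ⟨_, huv, q, hp.1, by simpa using hlen, fun z hz hzS => ?_⟩
    rcases hzS with rfl | hzS
    · exact hp.2 hz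
    · exact hpS.2 z hz hzS

theorem concat (h : G.HasPathAvoiding {w} u v m) (hvw : G.Adj v w) :
    G.HasPathAvoiding ∅ u w (m + 1) :=
  (cons hvw.symm (Set.notMem_empty w) (by simpa using h.reverse)).reverse

theorem map {H : SimpleGraph W} (f : G ↪g H) {S : Set W}
    (h : G.HasPathAvoiding (f ⁻¹' S) u v m) : H.HasPathAvoiding S (f u) (f v) m := by
  obtain ⟨p, hp, hlen, hpS⟩ := h
  exact ⟨p.map f.toHom, hp.map f.injective, by simpa using hlen, by simpa using hpS⟩

theorem mapLe {G' : SimpleGraph V} (hG : G ≤ G') (h : G.HasPathAvoiding S u v m) :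
    G'.HasPathAvoiding S u v m := by
  obtain ⟨p, hp, hlen, hpS⟩ := h
  exact ⟨p.mapLe hG, hp.mapLe hG, by simpa using hlen, by simpa using hpS⟩

theorem edgeOnCycle (h : G.HasPathAvoiding S v u m) (huv : G.Adj u v) (hm : 2 ≤ m) :
    EdgeOnCycle G s(u, v) (m + 1) := by
  obtain ⟨p, hp, rfl, -⟩ := h
  refine ⟨u, .cons huv p, (Walk.cons_isCycle_iff p huv).mpr ⟨hp, fun he => ?_⟩, rfl, by simp⟩
  have := hp.length_eq_one_of_mem_edges (Sym2.eq_swap ▸ he)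
  omega

end HasPathAvoiding

end SimpleGraph

section Sides

variable {n : ℕ}

def hypercubeSide (j : Fin (n + 1)) (b : Bool) : hypercube n ↪g hypercube (n + 1) where
  toFun := Fin.insertNth (α := fun _ => Bool) j b
  inj' := Fin.insertNth_right_injective (α := fun _ => Bool) b
  map_rel_iff' := by simp [hypercube_adj_iff, hammingDist_insertNth]

variable {j : Fin (n + 1)}

theorem hypercubeSide_apply (b : Bool) (x : Fin n → Bool) :
    hypercubeSide j b x = j.insertNth b x :=
  rfl

@[simp]
theorem hypercubeSide_inj {a b : Bool} {x y : Fin n → Bool} :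
    hypercubeSide j a x = hypercubeSide j b y ↔ a = b ∧ x = y :=
  Fin.insertNth_inj (α := fun _ => Bool)

theorem exists_hypercubeSide_eq (j : Fin (n + 1)) (u : Fin (n + 1) → Bool) :
    ∃ a x, hypercubeSide j a x = u :=
  ⟨_, _, Fin.insertNth_self_removeNth j u⟩

theorem hammingDist_hypercubeSide (a b : Bool) (x y : Fin n → Bool) :
    hammingDist (hypercubeSide j a x) (hypercubeSide j b y) =
      hammingDist x y + if a = b then 0 else 1 :=
  hammingDist_insertNth j a b x y

theorem hypercubeSide_adj_of_ne {a b : Bool} (hab : a ≠ b) (x : Fin n → Bool) :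
    (hypercube (n + 1)).Adj (hypercubeSide j a x) (hypercubeSide j b x) := by
  simp [hypercube_adj_iff, hammingDist_hypercubeSide, hab]

@[simp]
theorem hypercubeSide_preimage_insert_self (a : Bool) (y : Fin n → Bool)
    (S : Set (Fin (n + 1) → Bool)) :
    hypercubeSide j a ⁻¹' insert (hypercubeSide j a y) S = insert y (hypercubeSide j a ⁻¹' S) := by
  ext; simp

@[simp]
theorem hypercubeSide_preimage_insert_of_ne {a b : Bool} (hab : a ≠ b) (y : Fin n → Bool)
    (S : Set (Fin (n + 1) → Bool)) :
    hypercubeSide j a ⁻¹' insert (hypercubeSide j b y) S = hypercubeSide j a ⁻¹' S := by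
  ext; simp [hab]

@[simp]
theorem hypercubeSide_preimage_singleton_of_ne {a b : Bool} (hab : a ≠ b) (y : Fin n → Bool) :
    hypercubeSide j a ⁻¹' {hypercubeSide j b y} = ∅ := by
  ext; simp [hab]

namespace SimpleGraph.HasPathAvoiding

variable {S : Set (Fin (n + 1) → Bool)} {a c : Bool}

theorem cross (hac : a ≠ c) {x w y : Fin n → Bool} {t s : ℕ}
    (h₁ : (hypercube n).HasPathAvoiding (hypercubeSide j a ⁻¹' S) x w t)
    (h₂ : (hypercube n).HasPathAvoiding (hypercubeSide j c ⁻¹' S) w y s) :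
    (hypercube (n + 1)).HasPathAvoiding S (hypercubeSide j a x) (hypercubeSide j c y)
      (t + s + 1) := by
  induction t generalizing S x with
  | zero =>
    obtain ⟨p, -, hp, hpS⟩ := h₁
    obtain rfl := Walk.eq_of_length_eq_zero hp
    rw [zero_add]
    refine cons (hypercubeSide_adj_of_ne hac x) (hpS x p.start_mem_support) (map _ ?_)
    rwa [hypercubeSide_preimage_insert_of_ne hac.symm]
  | succ t ih =>
    obtain ⟨x', hxx', h₁'⟩ := h₁.exists_cons
    rw [show t + 1 + s + 1 = t + s + 1 + 1 by ring]
    refine cons ((hypercubeSide j a).map_adj_iff.mpr hxx') h₁.start_notMem (ih ?_ ?_)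
    · rwa [hypercubeSide_preimage_insert_self]
    · rwa [hypercubeSide_preimage_insert_of_ne hac.symm]

theorem detour (hac : a ≠ c) {p q y : Fin n → Bool} {s t : ℕ} (hp : hypercubeSide j a p ∉ S)
    (hD : (hypercube n).HasPathAvoiding (hypercubeSide j c ⁻¹' S) p q s)
    (hQ : (hypercube n).HasPathAvoiding (insert p (hypercubeSide j a ⁻¹' S)) q y t) :
    (hypercube (n + 1)).HasPathAvoiding S (hypercubeSide j a p) (hypercubeSide j a y)
      (s + t + 2) :=
  cons (hypercubeSide_adj_of_ne hac p) hp
    (cross hac.symm (by rwa [hypercubeSide_preimage_insert_of_ne hac.symm])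
      (by rwa [hypercubeSide_preimage_insert_self]))

end SimpleGraph.HasPathAvoiding

end Sides

theorem two_pow_mod_two {n : ℕ} (hn : n ≠ 0) : 2 ^ n % 2 = 0 :=
  Nat.even_iff.mp (Nat.even_pow.mpr ⟨even_two, hn⟩)

def HypercubeBipanconnected (n : ℕ) : Prop :=
  ∀ ⦃u v : Fin n → Bool⦄ ⦃m : ℕ⦄, m % 2 = hammingDist u v % 2 → hammingDist u v ≤ m →
    m < 2 ^ n → (u = v → m = 0) → (hypercube n).HasPathAvoiding ∅ u v m

namespace HypercubeBipanconnected

variable {n : ℕ} {j : Fin (n + 1)} {u v : Fin n → Bool} {m : ℕ}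

theorem same_side_succ (ih : HypercubeBipanconnected n) (a : Bool)
    (hpar : m % 2 = hammingDist u v % 2) (hle : hammingDist u v ≤ m) (hm : m < 2 ^ (n + 1))
    (huv : u = v → m = 0) :
    (hypercube (n + 1)).HasPathAvoiding ∅ (hypercubeSide j a u) (hypercubeSide j a v) m := by
  by_cases hshort : m < 2 ^ n
  · exact (ih hpar hle hshort huv).map _
  have := pow_succ 2 n
  have hd : 0 < hammingDist u v := hammingDist_pos.mpr fun h => by have := huv h; omega
  have hdn : hammingDist u v ≤ n := by simpa using hammingDist_le_card_fintype (x := u) (y := v)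
  have := two_pow_mod_two (n := n) (by omega)
  have := Nat.lt_two_pow_self (n := n)
  -- the detour through the other copy replaces the first edge `u w` of a longest path
  set t := 2 ^ n - 2 + hammingDist u v % 2 with ht
  obtain ⟨w, huw, hQ⟩ := (ih (u := u) (v := v) (m := t - 1 + 1) (by omega) (by omega)
    (by omega) fun h => absurd (hammingDist_eq_zero.mpr h) hd.ne').exists_cons
  have hD := ih (u := u) (v := w) (m := m - 1 - t)
    (by rw [hypercube_adj_iff.mp huw]; omega) (by rw [hypercube_adj_iff.mp huw]; omega)
    (by omega) (fun h => absurd h huw.ne)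
  convert hD.detour (j := j) (Bool.not_ne_self a).symm (Set.notMem_empty _) hQ using 1
  omega

theorem opposite_sides_succ_of_adj (ih : HypercubeBipanconnected n) {a c : Bool} (hac : a ≠ c)
    {w : Fin n → Bool} (hvw : (hypercube n).Adj v w) (hwu : w ≠ u)
    (hpar : m % 2 = (hammingDist u v + 1) % 2) (hm : m < 2 ^ (n + 1))
    (hmw : hammingDist u w + 2 ≤ m) :
    (hypercube (n + 1)).HasPathAvoiding ∅ (hypercubeSide j a u) (hypercubeSide j c v) m := by
  have := pow_succ 2 n
  have := hammingDist_eq_add_one_or_of_adj hvw u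
  have := hypercube_adj_iff.mp hvw.symm
  have : hammingDist u w ≤ n := by simpa using hammingDist_le_card_fintype (x := u) (y := w)
  have := two_pow_mod_two (n := n) (by rintro rfl; simp at hm; omega)
  have := Nat.lt_two_pow_self (n := n)
  -- the leg `u ⋯ w` in the first copy is as long as parity and size allow, but leaves at least
  -- one edge to the leg `w ⋯ v` in the second copy
  set t := min (m - 2) (2 ^ n - 2 + hammingDist u w % 2) with ht
  have h₁ := ih (u := u) (v := w) (m := t) (by omega) (by omega) (by omega) (absurd · hwu.symm)
  have h₂ := ih (u := w) (v := v) (m := m - 1 - t) (by omega) (by omega) (by omega)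
    (absurd · hvw.ne')
  convert (h₁.mono Set.preimage_empty.subset).cross (j := j) hac
    (h₂.mono Set.preimage_empty.subset) using 1
  omega

theorem opposite_sides_succ (ih : HypercubeBipanconnected n) {a c : Bool} (hac : a ≠ c)
    (hpar : m % 2 = (hammingDist u v + 1) % 2) (hle : hammingDist u v + 1 ≤ m)
    (hm : m < 2 ^ (n + 1)) :
    (hypercube (n + 1)).HasPathAvoiding ∅ (hypercubeSide j a u) (hypercubeSide j c v) m := by
  have := pow_succ 2 n
  by_cases hdirect : m ≤ 2 ^ n ∧ (u = v → m = 1)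
  · have := ih (u := u) (v := v) (m := m - 1) (by omega) (by omega) (by omega)
      fun h => by have := hdirect.2 h; omega
    convert (this.mono Set.preimage_empty.subset).cross (j := j) hac (.nil (by simp)) using 1
    omega
  have hlong : 2 ^ n < m ∨ u = v ∧ 3 ≤ m := by
    by_cases huv : u = v
    · subst huv
      simp only [hammingDist_self, zero_add, forall_const, not_and] at hpar hdirect
      exact .inr ⟨rfl, by omega⟩
    · simp only [huv, IsEmpty.forall_iff, and_true, not_le] at hdirect
      omega
  have hm3 : 2 ^ n < m ∨ 3 ≤ m := hlong.imp_right And.right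
  obtain ⟨w, hvw, hwu, -⟩ := exists_hypercube_adj_ne_notMem (u := u) v ∅
    (by
      rw [card_empty, Nat.pos_iff_ne_zero]
      rintro rfl
      simp at hm
      omega)
    (fun hd => by
      have hm' : 2 ^ n < m := hlong.resolve_right fun h => by simp [h.1] at hd
      rw [card_empty]
      by_contra hn
      have := Nat.pow_le_pow_right two_pos (show n + 1 ≤ 2 by omega)
      omega)
  have := hammingDist_eq_add_one_or_of_adj hvw u
  have := Nat.lt_two_pow_self (n := n)
  have : hammingDist u w ≤ n := by simpa using hammingDist_le_card_fintype (x := u) (y := w)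
  refine ih.opposite_sides_succ_of_adj hac hvw hwu hpar hm ?_
  rcases hlong with hlong | ⟨rfl, -⟩
  · omega
  · simp only [hammingDist_self] at *
    omega

end HypercubeBipanconnected

theorem hypercube_bipanconnected (n : ℕ) : HypercubeBipanconnected n := by
  induction n with
  | zero =>
    intro u v m _ _ hm _
    obtain rfl : m = 0 := by simpa using hm
    obtain rfl : u = v := Subsingleton.elim u v
    exact .nil (Set.notMem_empty u)
  | succ n ih =>
    intro u v m hpar hle hm huv
    obtain ⟨a, u, rfl⟩ := exists_hypercubeSide_eq 0 u
    obtain ⟨c, v, rfl⟩ := exists_hypercubeSide_eq 0 v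
    rw [hammingDist_hypercubeSide] at hpar hle
    rcases eq_or_ne a c with rfl | hac
    · simp only [if_true, add_zero] at hpar hle
      exact ih.same_side_succ a hpar hle hm fun h => huv (by rw [h])
    · simp only [hac, if_false] at hpar hle
      exact ih.opposite_sides_succ hac hpar hle hm

def HypercubeBipanconnectedAvoiding (n : ℕ) : Prop :=
  ∀ ⦃x u v : Fin n → Bool⦄ ⦃m : ℕ⦄, u ≠ v → u ≠ x → v ≠ x → m % 2 = hammingDist u v % 2 →
    hammingDist u v ≤ m → m + 3 ≤ 2 ^ n → (hypercube n).HasPathAvoiding {x} u v m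

namespace HypercubeBipanconnectedAvoiding

variable {n : ℕ} {j : Fin (n + 1)} {a e : Bool} {x u v : Fin n → Bool} {m : ℕ}

/-- The detour through the other copy, which has to avoid `x`, replaces one of the first three
edges of the path `u w ⋯ v` that does not contain `x`. -/
theorem detour_succ (ih : HypercubeBipanconnectedAvoiding n) (hae : a ≠ e) {w : Fin n → Bool}
    {r s : ℕ} (huw : (hypercube n).Adj u w)
    (hQ : (hypercube n).HasPathAvoiding {u} w v (r + 1)) (hx : w ≠ x ∨ 1 ≤ r)
    (hs : s % 2 = 1) (hs3 : s + 3 ≤ 2 ^ n) :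
    (hypercube (n + 1)).HasPathAvoiding {hypercubeSide j e x} (hypercubeSide j a u)
      (hypercubeSide j a v) (s + r + 3) := by
  have hdist {y z : Fin n → Bool} (h : (hypercube n).Adj y z) :
      s % 2 = hammingDist y z % 2 ∧ hammingDist y z ≤ s := by
    rw [hypercube_adj_iff.mp h]; omega
  have hu : hypercubeSide j a u ∉ ({hypercubeSide j e x} : Set _) := by simp [hae]
  have huw' := (hypercubeSide j a).map_adj_iff.mpr huw
  by_cases hxu : u = x
  · subst hxu
    obtain ⟨w₂, hww₂, hQ₂⟩ := hQ.exists_cons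
    have hw₂ := hQ₂.start_notMem
    simp only [Set.mem_insert_iff, Set.mem_singleton_iff, not_or] at hw₂
    have hD := ih hww₂.ne huw.ne' hw₂.2 (hdist hww₂).1 (hdist hww₂).2 hs3
    have := (hD.mono (by simp [hae.symm])).detour
      (j := j) (S := insert (hypercubeSide j a u) {hypercubeSide j e u}) hae
      (by simp [hae, huw.ne']) (hQ₂.mono (by simp [hae]))
    exact HasPathAvoiding.cons huw' hu this
  by_cases hxw : w = x
  · subst hxw
    obtain ⟨r, rfl⟩ : ∃ r', r = r' + 1 := ⟨r - 1, by have := hx.resolve_left (· rfl); omega⟩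
    obtain ⟨w₂, hww₂, hQ₂⟩ := hQ.exists_cons
    have hw₂ := hQ₂.start_notMem
    simp only [Set.mem_insert_iff, Set.mem_singleton_iff, not_or] at hw₂
    obtain ⟨w₃, hw₂w₃, hQ₃⟩ := hQ₂.exists_cons
    have hw₃ := hQ₃.start_notMem
    simp only [Set.mem_insert_iff, Set.mem_singleton_iff, not_or] at hw₃
    have hD := ih hw₂w₃.ne hww₂.ne' hw₃.2.1 (hdist hw₂w₃).1 (hdist hw₂w₃).2 hs3
    have := (hD.mono (by simp [hae.symm])).detour (j := j)
      (S := insert (hypercubeSide j a w) (insert (hypercubeSide j a u) {hypercubeSide j e w}))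
      hae (by simp [hae, hw₂.1, hw₂.2]) (hQ₃.mono (by simp [hae]))
    have := HasPathAvoiding.cons ((hypercubeSide j a).map_adj_iff.mpr hww₂)
      (by simp [hae, huw.ne']) this
    convert HasPathAvoiding.cons huw' hu this using 1
    omega
  · have hD := ih huw.ne hxu hxw (hdist huw).1 (hdist huw).2 hs3
    convert (hD.mono (by simp)).detour (j := j) hae hu (hQ.mono (by simp [hae])) using 1
    omega

theorem same_side_succ (ih : HypercubeBipanconnectedAvoiding n) (hae : a ≠ e) (huv : u ≠ v)
    (hpar : m % 2 = hammingDist u v % 2) (hle : hammingDist u v ≤ m)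
    (hm : m + 3 ≤ 2 ^ (n + 1)) :
    (hypercube (n + 1)).HasPathAvoiding {hypercubeSide j e x} (hypercubeSide j a u)
      (hypercubeSide j a v) m := by
  by_cases hshort : m < 2 ^ n
  · exact ((hypercube_bipanconnected n hpar hle hshort (absurd · huv)).mono
      (hypercubeSide_preimage_singleton_of_ne hae x).subset).map _
  have := pow_succ 2 n
  have hd : 0 < hammingDist u v := hammingDist_pos.mpr huv
  have hdn : hammingDist u v ≤ n := by simpa using hammingDist_le_card_fintype (x := u) (y := v)
  have := two_pow_mod_two (n := n) (by omega)
  have := Nat.lt_two_pow_self (n := n)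
  set t := 2 ^ n - 2 + hammingDist u v % 2 with ht
  obtain ⟨w, huw, hQ, hx⟩ : ∃ w, (hypercube n).Adj u w ∧
      (hypercube n).HasPathAvoiding {u} w v (t - 2 + 1) ∧ (w ≠ x ∨ 1 ≤ t - 2) := by
    by_cases ht3 : 3 ≤ t
    · obtain ⟨w, huw, hQ⟩ := (hypercube_bipanconnected n (u := u) (v := v) (m := t - 2 + 1 + 1)
        (by omega) (by omega) (by omega) (absurd · huv)).exists_cons
      exact ⟨w, huw, hQ.mono (by simp), .inr (by omega)⟩
    · -- only two edges: choose the middle vertex `w ≠ x`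
      obtain ⟨w, huw, hwv, hwx⟩ := exists_hypercube_adj_adj_ne (u := u) (v := v) (by omega) x
      refine ⟨w, huw, ?_, .inl hwx⟩
      rw [show t - 2 = 0 by omega]
      exact .cons hwv (by simpa using huw.ne') (.nil (by simp [hwv.ne', huv.symm]))
  convert ih.detour_succ (j := j) (s := m - 1 - t) hae huw hQ hx (by omega) (by omega) using 1
  omega

theorem opposite_sides_succ_of_adj (ih : HypercubeBipanconnectedAvoiding n) (hae : a ≠ e)
    (hvx : v ≠ x) {w : Fin n → Bool} (hvw : (hypercube n).Adj v w) (hwu : w ≠ u) (hwx : w ≠ x)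
    (hpar : m % 2 = (hammingDist u v + 1) % 2) (hm : m + 3 ≤ 2 ^ (n + 1))
    (hmw : hammingDist u w + 2 ≤ m) :
    (hypercube (n + 1)).HasPathAvoiding {hypercubeSide j e x} (hypercubeSide j a u)
      (hypercubeSide j e v) m := by
  have := pow_succ 2 n
  have := hammingDist_eq_add_one_or_of_adj hvw u
  have := hypercube_adj_iff.mp hvw.symm
  have : hammingDist u w ≤ n := by simpa using hammingDist_le_card_fintype (x := u) (y := w)
  have := two_pow_mod_two (n := n) (by rintro rfl; simp at hm)
  have := Nat.lt_two_pow_self (n := n)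
  set t := min (m - 2) (2 ^ n - 2 + hammingDist u w % 2) with ht
  have h₁ := hypercube_bipanconnected n (u := u) (v := w) (m := t) (by omega) (by omega)
    (by omega) (absurd · hwu.symm)
  have h₂ := ih (u := w) (v := v) (m := m - 1 - t) hvw.ne' hwx hvx (by omega) (by omega)
    (by omega)
  convert (h₁.mono (hypercubeSide_preimage_singleton_of_ne hae x).subset).cross (j := j) hae
    (h₂.mono (by simp)) using 1
  omega

theorem opposite_sides_succ (ih : HypercubeBipanconnectedAvoiding n) (hae : a ≠ e)
    (hvx : v ≠ x) (hpar : m % 2 = (hammingDist u v + 1) % 2) (hle : hammingDist u v + 1 ≤ m)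
    (hm : m + 3 ≤ 2 ^ (n + 1)) :
    (hypercube (n + 1)).HasPathAvoiding {hypercubeSide j e x} (hypercubeSide j a u)
      (hypercubeSide j e v) m := by
  have := pow_succ 2 n
  by_cases hdirect : m ≤ 2 ^ n ∧ (u = v → m = 1)
  · have := hypercube_bipanconnected n (u := u) (v := v) (m := m - 1) (by omega) (by omega)
      (by omega) fun h => by have := hdirect.2 h; omega
    convert (this.mono (hypercubeSide_preimage_singleton_of_ne hae x).subset).cross (j := j) hae
      (.nil (by simpa using hvx)) using 1
    omega
  have hlong : 2 ^ n < m ∨ u = v ∧ 3 ≤ m := by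
    by_cases huv : u = v
    · subst huv
      simp only [hammingDist_self, zero_add, forall_const, not_and] at hpar hdirect
      exact .inr ⟨rfl, by omega⟩
    · simp only [huv, IsEmpty.forall_iff, and_true, not_le] at hdirect
      omega
  have hm3 : 2 ^ n < m ∨ 3 ≤ m := hlong.imp_right And.right
  obtain ⟨w, hvw, hwu, hwx⟩ := exists_hypercube_adj_ne_notMem (u := u) v {x}
    (by
      rw [card_singleton]
      by_contra hn
      have := Nat.pow_le_pow_right two_pos (show n + 1 ≤ 2 by omega)
      omega)
    (fun hd => by
      have hm' : 2 ^ n < m := hlong.resolve_right fun h => by simp [h.1] at hd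
      rw [card_singleton]
      by_contra hn
      have := Nat.pow_le_pow_right two_pos (show n + 1 ≤ 3 by omega)
      omega)
  have := hammingDist_eq_add_one_or_of_adj hvw u
  have := Nat.lt_two_pow_self (n := n)
  have : hammingDist u w ≤ n := by simpa using hammingDist_le_card_fintype (x := u) (y := w)
  refine ih.opposite_sides_succ_of_adj hae hvx hvw hwu (by simpa using hwx) hpar hm ?_
  rcases hlong with hlong | ⟨rfl, -⟩
  · omega
  · simp only [hammingDist_self] at *
    omega

end HypercubeBipanconnectedAvoiding

theorem hypercube_bipanconnected_avoiding (n : ℕ) : HypercubeBipanconnectedAvoiding n := by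
  induction n with
  | zero => exact fun x u v m huv => absurd (Subsingleton.elim u v) huv
  | succ n ih =>
    intro x u v m huv hux hvx hpar hle hm
    obtain ⟨j, hj⟩ := Function.ne_iff.mp hux
    obtain ⟨a, u, rfl⟩ := exists_hypercubeSide_eq j u
    obtain ⟨c, v, rfl⟩ := exists_hypercubeSide_eq j v
    obtain ⟨e, x, rfl⟩ := exists_hypercubeSide_eq j x
    have hae : a ≠ e := by simpa [hypercubeSide_apply] using hj
    rw [hammingDist_hypercubeSide] at hpar hle
    rcases eq_or_ne c a with rfl | hca
    · simp only [if_true, add_zero] at hpar hle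
      exact ih.same_side_succ hae (fun h => huv (by rw [h])) hpar hle hm
    · obtain rfl : c = e := by revert hca hae; cases a <;> cases c <;> cases e <;> simp
      simp only [hae, if_false] at hpar hle
      exact ih.opposite_sides_succ hae (fun h => hvx (by rw [h])) hpar hle hm

section Enhanced

variable {n k : ℕ}

theorem hammingDist_of_skipRel (hkn : k ≤ n) {u v : Fin n → Bool} (h : skipRel n k u v) :
    hammingDist u v = k := by
  rw [hammingDist, filter_congr fun i _ => ⟨fun huv => ?_, (h.2 i).1⟩, Fin.card_filter_val_lt,
    min_eq_right hkn]
  by_contra hik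
  exact huv ((h.2 i).2 (not_lt.mp hik))

theorem exists_skipRel (hk : 0 < k) (hkn : k ≤ n) (u : Fin n → Bool) : ∃ y, skipRel n k y u := by
  set y : Fin n → Bool := fun i => if (i : ℕ) < k then !u i else u i
  have hy (i : Fin n) : (i < k → y i ≠ u i) ∧ (k ≤ i → y i = u i) :=
    ⟨fun hik => by simp [y, hik], fun hik => by simp [y, not_lt.mpr hik]⟩
  exact ⟨y, fun h => (hy ⟨0, by omega⟩).1 hk (congrFun h _), hy⟩

theorem hypercube_le_enhanced : hypercube n ≤ enhanced n k :=
  fun _ _ => Or.inl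

end Enhanced

theorem stmt14_general (n k : ℕ) (hk : Even k) (h1 : 2 ≤ k) (h2 : k ≤ n) :
    ∀ e ∈ (enhanced n k).edgeSet, ∀ l : ℕ, Odd l → k + 3 ≤ l → l ≤ 2 ^ n - 1 →
      EdgeOnCycle (enhanced n k) e l := by
  intro e
  induction e using Sym2.ind with | h u v => ?_
  rw [Nat.even_iff] at hk
  rw [mem_edgeSet]
  rintro (hcube | hskip) l hl hkl hln <;> rw [Nat.odd_iff] at hl
  · obtain ⟨y, hyu⟩ := exists_skipRel (by omega) h2 u
    have hdy := hammingDist_of_skipRel h2 hyu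
    have hstep := hammingDist_eq_add_one_or_of_adj hcube y
    rw [hammingDist_comm y v] at hstep
    have hvy : v ≠ y := by rw [← hammingDist_pos]; omega
    have hP := hypercube_bipanconnected_avoiding n (x := u) (u := v) (v := y) (m := l - 2) hvy
      hcube.ne' hyu.1 (by omega) (by omega) (by omega)
    convert ((hP.mapLe hypercube_le_enhanced).concat (Or.inr hyu)).edgeOnCycle (Or.inl hcube)
      (by omega) using 1
    omega
  · have hdist := hammingDist_of_skipRel h2 hskip
    have hP := hypercube_bipanconnected n (u := v) (v := u) (m := l - 1)
      (by rw [hammingDist_comm]; omega) (by rw [hammingDist_comm]; omega) (by omega)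
      fun h => by subst h; simp at hdist; omega
    convert (hP.mapLe hypercube_le_enhanced).edgeOnCycle (Or.inr hskip) (by omega) using 1
    omega

/-- If `k` is even, then every edge of `Q_{n,k}` (`n ≥ 3`, `2 ≤ k ≤ n`) lies on a
cycle of every odd length `l` with `k + 3 ≤ l ≤ 2^n - 1`. -/
theorem stmt14 (n k : ℕ) (hk : Even k) (h1 : 2 ≤ k) (h2 : k ≤ n) (hn : 3 ≤ n) :
    ∀ e ∈ (enhanced n k).edgeSet, ∀ l : ℕ, Odd l → k + 3 ≤ l → l ≤ 2 ^ n - 1 →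
      EdgeOnCycle (enhanced n k) e l :=
  stmt14_general n k hk h1 h2
end
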